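/- arXiv:2102.09791 — 2 statements merged into one kernel-verified Lean document; each statement's English description precedes it below -/
import Mathlib

section
/- Let G be a connected graph, v a vertex, and x, y vertices such that some set W ⊆ V(G) with v,x,y ∉ W separates v from x and separates v from y (every v–x path and every v–y path contains a vertex of W). If dist_G(w,x) = dist_G(w,y) for all w ∈ W, then dist_G(v,x) = dist_G(v,y); in particular, v does not resolve the pair {x,y}. -/
lemma stmt9_aux {V : Type*} [Fintype V] (G : SimpleGraph V) (hG : G.Connected)
    (v a b : V) (W : Finset V)
    (hsep : ∀ p : G.Path v a, ∃ w ∈ W, w ∈ (p : G.Walk v a).support)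
    (heq : ∀ w ∈ W, G.dist w a = G.dist w b) :
    G.dist v b ≤ G.dist v a := by
  classical
  obtain ⟨p, hp⟩ := (hG v a).exists_walk_length_eq_dist
  obtain ⟨w, hwW, hws⟩ := hsep p.toPath
  have hlen : (p.toPath : G.Walk v a).length = G.dist v a :=
    le_antisymm (hp ▸ SimpleGraph.Walk.length_bypass_le p)
      (SimpleGraph.dist_le _)
  set q : G.Walk v a := (p.toPath : G.Walk v a)
  have hsplit := congrArg SimpleGraph.Walk.length (q.take_spec hws)
  rw [SimpleGraph.Walk.length_append] at hsplit
  have h1 : G.dist v w ≤ (q.takeUntil w hws).length := SimpleGraph.dist_le _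
  have h2 : G.dist w a ≤ (q.dropUntil w hws).length := SimpleGraph.dist_le _
  have htri : G.dist v b ≤ G.dist v w + G.dist w b := hG.dist_triangle
  have := heq w hwW
  omega

/-- If `W` separates `v` from both `x` and `y` and every `w ∈ W` is equidistant
to `x` and `y`, then `v` is equidistant to `x` and `y`. -/
theorem stmt9 {V : Type*} [Fintype V] (G : SimpleGraph V) (hG : G.Connected)
    (v x y : V) (W : Finset V) (hWne : W.Nonempty)
    (hv : v ∉ W) (hx : x ∉ W) (hy : y ∉ W)
    (hsepx : ∀ p : G.Path v x, ∃ w ∈ W, w ∈ (p : G.Walk v x).support)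
    (hsepy : ∀ p : G.Path v y, ∃ w ∈ W, w ∈ (p : G.Walk v y).support)
    (heq : ∀ w ∈ W, G.dist w x = G.dist w y) :
    G.dist v x = G.dist v y := by
  exact le_antisymm
    (stmt9_aux G hG v y x W hsepy (fun w hw => (heq w hw).symm))
    (stmt9_aux G hG v x y W hsepx heq)
end

section
/- Let G be a finite connected graph and v a vertex such that {v} is a resolving set of G. Then G is a path graph and v is one of its endpoints (or G is a single vertex). -/
/-!
The distances `dist v u` are distinct and below `card V`, so `u ↦ dist v u` is a bijection onto
`Fin (card V)`. Adjacent vertices have distances from `v` differing by at most one, hence by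
exactly one. Conversely, if `dist v b = dist v a + 1`, the penultimate vertex of a geodesic from
`v` to `b` is at distance `dist v a` from `v`, so it is `a`, which is therefore adjacent to `b`.
Thus the distance map is an isomorphism onto a path graph, sending `v` to `0`.
-/

open Function

namespace SimpleGraph

variable {V : Type*} {G : SimpleGraph V}

lemma dist_lt_card [Fintype V] (u w : V) : G.dist u w < Fintype.card V := by
  by_cases h : G.Reachable u w
  · obtain ⟨p, hp, hlen⟩ := h.exists_path_of_dist
    exact hlen ▸ hp.length_lt
  · rw [dist_eq_zero_of_not_reachable h]
    exact Fintype.card_pos_iff.mpr ⟨u⟩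

lemma exists_adj_dist_eq_of_dist_eq_add_one {v u : V} {k : ℕ} (h : G.dist v u = k + 1) :
    ∃ w, G.Adj w u ∧ G.dist v w = k := by
  obtain ⟨p, hp⟩ := exists_walk_of_dist_ne_zero (G := G) (by omega : G.dist v u ≠ 0)
  have hnil : ¬p.Nil := fun hnil => by have := hnil.length_eq_zero; omega
  have hle : G.dist v p.penultimate ≤ k := by
    have := dist_le p.dropLast
    rw [Walk.length_dropLast] at this
    omega
  refine ⟨p.penultimate, p.adj_penultimate hnil, ?_⟩
  have := (p.adj_penultimate hnil).diff_dist_adj (u := v)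
  omega

lemma adj_iff_of_injective_dist {v : V} (hres : Injective (G.dist v)) (a b : V) :
    G.Adj a b ↔ G.dist v a + 1 = G.dist v b ∨ G.dist v b + 1 = G.dist v a := by
  constructor
  · intro hab
    have hne : G.dist v a ≠ G.dist v b := fun h => hab.ne (hres h)
    have := hab.diff_dist_adj (u := v)
    omega
  · rintro (h | h)
    · obtain ⟨w, hw, hdist⟩ := exists_adj_dist_eq_of_dist_eq_add_one h.symm
      exact hres hdist ▸ hw
    · obtain ⟨w, hw, hdist⟩ := exists_adj_dist_eq_of_dist_eq_add_one h.symm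
      exact (hres hdist ▸ hw).symm

variable [Fintype V] {v : V}

noncomputable def isoPathGraphOfInjectiveDist (hres : Injective (G.dist v)) :
    G ≃g pathGraph (Fintype.card V) where
  toEquiv := Equiv.ofBijective (fun u => ⟨G.dist v u, dist_lt_card v u⟩) <|
    (Fintype.bijective_iff_injective_and_card _).mpr
      ⟨fun _ _ h => hres (Fin.mk.inj h), Fintype.card_fin _ |>.symm⟩
  map_rel_iff' {a b} := by
    rw [pathGraph_adj]
    exact (adj_iff_of_injective_dist hres a b).symm

@[simp]
lemma isoPathGraphOfInjectiveDist_apply (hres : Injective (G.dist v)) (u : V) :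
    (isoPathGraphOfInjectiveDist hres u : ℕ) = G.dist v u :=
  rfl

end SimpleGraph

theorem stmt14_general {V : Type*} [Fintype V] (G : SimpleGraph V)
    (v : V) (hres : Function.Injective (G.dist v)) :
    ∃ (n : ℕ) (hn : 0 < n) (φ : G ≃g SimpleGraph.pathGraph n),
      φ v = ⟨0, hn⟩ ∨ ((φ v : ℕ) = n - 1) :=
  ⟨Fintype.card V, Fintype.card_pos_iff.mpr ⟨v⟩, SimpleGraph.isoPathGraphOfInjectiveDist hres,
    Or.inl (Fin.ext (by simp))⟩

/-- If a single vertex `v` resolves a connected graph `G`, then `G` is a path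
graph and `v` is one of its endpoints. -/
theorem stmt14 {V : Type*} [Fintype V] (G : SimpleGraph V) (hG : G.Connected)
    (v : V) (hres : Function.Injective (G.dist v)) :
    ∃ (n : ℕ) (hn : 0 < n) (φ : G ≃g SimpleGraph.pathGraph n),
      φ v = ⟨0, hn⟩ ∨ ((φ v : ℕ) = n - 1) :=
  stmt14_general G v hres
end
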